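/- arXiv:1912.04694 — 5 statements merged into one kernel-verified Lean document; each statement's English description precedes it below -/
import Mathlib

section
/- Let A₁,…,A_K ∈ F^{I₁×I₂} with the stacked matrix [A₁; …; A_K] (vertical concatenation) having full column rank, and let the stacked matrix [A₁ᵀ; …; A_Kᵀ] also have full column rank. If M₁ ∈ F^{I₁×I₁} and M₂ ∈ F^{I₂×I₂} satisfy M₁ᵀ Aᵢ = Aᵢ M₂ for all i, then M₁ and M₂ have the same minimal polynomial. -/
open Matrix Polynomial

/-- If the vertically stacked matrix `[A₁; …; A_K]` has full column rank,
the stacked matrix `[A₁ᵀ; …; A_Kᵀ]` has full column rank, and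
`M₁ᵀ Aᵢ = Aᵢ M₂` for all `i`, then `M₁` and `M₂` have the same minimal
polynomial. Full column rank of a vertical stacking is expressed as
triviality of the common kernel. -/
theorem stmt_1 {F : Type*} [Field F] {I₁ I₂ K : ℕ}
    (A : Fin K → Matrix (Fin I₁) (Fin I₂) F)
    (hfcr : ∀ x : Fin I₂ → F, (∀ i, (A i).mulVec x = 0) → x = 0)
    (hfcrT : ∀ y : Fin I₁ → F, (∀ i, (A i)ᵀ.mulVec y = 0) → y = 0)
    (M₁ : Matrix (Fin I₁) (Fin I₁) F) (M₂ : Matrix (Fin I₂) (Fin I₂) F)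
    (h : ∀ i, M₁ᵀ * A i = A i * M₂) :
    minpoly F M₁ = minpoly F M₂ := by
  have key : ∀ p : F[X], ∀ i, (aeval M₁ p)ᵀ * A i = A i * aeval M₂ p := by
    intro p
    induction p using Polynomial.induction_on' with
    | add p q hp hq => intro i; simp [Matrix.add_mul, Matrix.mul_add, hp i, hq i]
    | monomial k a =>
        intro i
        induction k with
        | zero => simp [Algebra.algebraMap_eq_smul_one, Matrix.smul_mul, Matrix.mul_smul]
        | succ n ih =>
            have hmon : (monomial (n+1) a : F[X]) = monomial n a * X := by
              simp [Polynomial.monomial_mul_X]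
            rw [hmon, _root_.map_mul, _root_.map_mul, aeval_X, aeval_X, Matrix.transpose_mul,
              Matrix.mul_assoc, ih, ← Matrix.mul_assoc, h i, Matrix.mul_assoc]
            congr 1
            simp [aeval_monomial, Algebra.algebraMap_eq_smul_one, smul_mul_assoc,
              mul_smul_comm, ← pow_succ, ← pow_succ']
  -- equal annihilation
  have hzero : ∀ p : F[X], aeval M₁ p = 0 ↔ aeval M₂ p = 0 := by
    intro p
    constructor
    · intro hp
      have : ∀ i, A i * aeval M₂ p = 0 := by
        intro i; rw [← key p i, hp, transpose_zero, Matrix.zero_mul]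
      ext j l
      have := hfcr (fun m => aeval M₂ p m l) (fun i => by
        funext r
        have := congrFun (congrFun (this i) r) l
        simpa [Matrix.mul_apply, Matrix.mulVec, dotProduct] using this)
      simpa using congrFun this j
    · intro hp
      have h0 : ∀ i, (aeval M₁ p)ᵀ * A i = 0 := by
        intro i; rw [key p i, hp, Matrix.mul_zero]
      have hT : ∀ i, (A i)ᵀ * aeval M₁ p = 0 := by
        intro i
        have := congrArg Matrix.transpose (h0 i)
        simpa [Matrix.transpose_mul] using this
      ext j l
      have := hfcrT (fun m => aeval M₁ p m l) (fun i => by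
        funext r
        have := congrFun (congrFun (hT i) r) l
        simpa [Matrix.mul_apply, Matrix.mulVec, dotProduct] using this)
      simpa using congrFun this j
  have hi1 : IsIntegral F M₁ := Matrix.isIntegral M₁
  have hi2 : IsIntegral F M₂ := Matrix.isIntegral M₂
  apply Polynomial.eq_of_monic_of_associated (minpoly.monic hi1) (minpoly.monic hi2)
  have d1 : minpoly F M₁ ∣ minpoly F M₂ :=
    minpoly.dvd F M₁ ((hzero _).mpr (minpoly.aeval F M₂))
  have d2 : minpoly F M₂ ∣ minpoly F M₁ :=
    minpoly.dvd F M₂ ((hzero _).mp (minpoly.aeval F M₁))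
  exact associated_of_dvd_dvd d1 d2
end

section
/- Let M₁ ∈ F^{I₁×I₁}, M₂ ∈ F^{I₂×I₂} be diagonalizable matrices satisfying M₁ᵀ Aᵢ = Aᵢ M₂ for matrices A₁,…,A_K ∈ F^{I₁×I₂}, where both [A₁;…;A_K] and [A₁ᵀ;…;A_Kᵀ] have full column rank. Then M₁ and M₂ have the same set of eigenvalues (i.e., the same spectrum as sets). -/
open Matrix

lemma mem_spec_iff_aux {n : ℕ} (M : Matrix (Fin n) (Fin n) ℂ) (μ : ℂ) :
    μ ∈ spectrum ℂ M ↔ ∃ v : Fin n → ℂ, v ≠ 0 ∧ M.mulVec v = μ • v := by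
  rw [spectrum.mem_iff, Matrix.isUnit_iff_isUnit_det, isUnit_iff_ne_zero, not_not,
    ← Matrix.exists_mulVec_eq_zero_iff]
  constructor
  · rintro ⟨v, hv, hmv⟩
    refine ⟨v, hv, ?_⟩
    have : (algebraMap ℂ (Matrix (Fin n) (Fin n) ℂ)) μ = μ • 1 := by
      simp [Algebra.algebraMap_eq_smul_one]
    rw [this, Matrix.sub_mulVec, Matrix.smul_mulVec, Matrix.one_mulVec, sub_eq_zero] at hmv
    exact hmv.symm
  · rintro ⟨v, hv, hmv⟩
    refine ⟨v, hv, ?_⟩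
    have : (algebraMap ℂ (Matrix (Fin n) (Fin n) ℂ)) μ = μ • 1 := by
      simp [Algebra.algebraMap_eq_smul_one]
    rw [this, Matrix.sub_mulVec, Matrix.smul_mulVec, Matrix.one_mulVec, hmv, sub_self]

lemma spec_transpose_aux {n : ℕ} (M : Matrix (Fin n) (Fin n) ℂ) :
    spectrum ℂ Mᵀ = spectrum ℂ M := by
  ext μ
  rw [spectrum.mem_iff, spectrum.mem_iff, Matrix.isUnit_iff_isUnit_det,
    Matrix.isUnit_iff_isUnit_det]
  have : ((algebraMap ℂ (Matrix (Fin n) (Fin n) ℂ)) μ - Mᵀ) =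
      ((algebraMap ℂ (Matrix (Fin n) (Fin n) ℂ)) μ - M)ᵀ := by
    simp [Matrix.transpose_sub, Algebra.algebraMap_eq_smul_one]
  rw [this, Matrix.det_transpose]

/-- If `M₁` and `M₂` are diagonalizable, `M₁ᵀ Aᵢ = Aᵢ M₂` for all `i`, and
both the stacked matrix `[A₁;…;A_K]` and `[A₁ᵀ;…;A_Kᵀ]` have full column
rank, then `M₁` and `M₂` have the same spectrum. -/
theorem stmt_11 {I₁ I₂ K : ℕ}
    (M₁ : Matrix (Fin I₁) (Fin I₁) ℂ) (M₂ : Matrix (Fin I₂) (Fin I₂) ℂ)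
    (hdiag₁ : ∃ (P : Matrix (Fin I₁) (Fin I₁) ℂ) (d : Fin I₁ → ℂ),
      IsUnit P.det ∧ M₁ = P * Matrix.diagonal d * P⁻¹)
    (hdiag₂ : ∃ (P : Matrix (Fin I₂) (Fin I₂) ℂ) (d : Fin I₂ → ℂ),
      IsUnit P.det ∧ M₂ = P * Matrix.diagonal d * P⁻¹)
    (A : Fin K → Matrix (Fin I₁) (Fin I₂) ℂ)
    (hfcr : ∀ x : Fin I₂ → ℂ, (∀ i, (A i).mulVec x = 0) → x = 0)
    (hfcrT : ∀ y : Fin I₁ → ℂ, (∀ i, (A i)ᵀ.mulVec y = 0) → y = 0)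
    (h : ∀ i, M₁ᵀ * A i = A i * M₂) :
    spectrum ℂ M₁ = spectrum ℂ M₂ := by
  have hT : ∀ i, (A i)ᵀ * M₁ = M₂ᵀ * (A i)ᵀ := by
    intro i
    have := congrArg Matrix.transpose (h i)
    simpa [Matrix.transpose_mul] using this
  ext μ
  constructor
  · intro hμ
    rw [mem_spec_iff_aux] at hμ
    obtain ⟨v, hv, hmv⟩ := hμ
    rw [← spec_transpose_aux, mem_spec_iff_aux]
    -- some (A i)ᵀ v ≠ 0
    by_cases hall : ∀ i, (A i)ᵀ.mulVec v = 0
    · exact absurd (hfcrT v hall) hv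
    · push_neg at hall
      obtain ⟨i, hi⟩ := hall
      refine ⟨(A i)ᵀ.mulVec v, hi, ?_⟩
      calc M₂ᵀ.mulVec ((A i)ᵀ.mulVec v) = ((A i)ᵀ * M₁).mulVec v := by
            rw [hT i, Matrix.mulVec_mulVec]
        _ = μ • (A i)ᵀ.mulVec v := by
            rw [← Matrix.mulVec_mulVec, hmv, Matrix.mulVec_smul]
  · intro hμ
    rw [mem_spec_iff_aux] at hμ
    obtain ⟨v, hv, hmv⟩ := hμ
    rw [← spec_transpose_aux, mem_spec_iff_aux]
    by_cases hall : ∀ i, (A i).mulVec v = 0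
    · exact absurd (hfcr v hall) hv
    · push_neg at hall
      obtain ⟨i, hi⟩ := hall
      refine ⟨(A i).mulVec v, hi, ?_⟩
      calc M₁ᵀ.mulVec ((A i).mulVec v) = (A i * M₂).mulVec v := by
            rw [← h i, Matrix.mulVec_mulVec]
        _ = μ • (A i).mulVec v := by
            rw [← Matrix.mulVec_mulVec, hmv, Matrix.mulVec_smul]
end

section
/- Let M₁ ∈ F^{I₁×I₁}, M₂ ∈ F^{I₂×I₂}, and A₁,…,A_K ∈ F^{I₁×I₂} satisfy M₁ᵀ Aᵢ = Aᵢ M₂ for all i, where [A₁ᵀ;…;A_Kᵀ] has full column rank. If M₂ is diagonalizable (over F), then the minimal polynomial of M₁ divides the minimal polynomial of M₂; in particular if additionally [A₁;…;A_K] has full column rank then M₁ is also diagonalizable. -/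
/-! Intertwining passes to polynomials: `q(M₁)ᵀ Aᵢ = Aᵢ q(M₂)`. Taking `q` to be the minimal
polynomial of `M₂`, the right side vanishes, so every column of `q(M₁)` lies in the common kernel
of the `Aᵢᵀ`, which is trivial; hence `q(M₁) = 0`. A diagonalizable matrix has a squarefree minimal
polynomial, and over `ℂ` a matrix annihilated by a squarefree polynomial is semisimple, so its
eigenspaces span and an eigenbasis diagonalizes it. -/

open Matrix Polynomial

theorem Module.End.exists_basis_eigenvectors {K V : Type*} [Field K] [AddCommGroup V]
    [Module K V] {f : End K V} (h : ⨆ μ, f.eigenspace μ = ⊤) :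
    ∃ (s : Set V) (b : Basis s K V) (μ : s → K), ∀ i, f (b i) = μ i • b i := by
  obtain ⟨s, hsub, hspan, hli⟩ := exists_linearIndependent K (⋃ μ, (f.eigenspace μ : Set V))
  rw [← Submodule.iSup_eq_span, h] at hspan
  have (v : s) : ∃ μ : K, f v = μ • (v : V) := by
    obtain ⟨μ, hμ⟩ := Set.mem_iUnion.1 (hsub v.2)
    exact ⟨μ, mem_eigenspace_iff.1 hμ⟩
  choose μ hμ using this
  exact ⟨s, Basis.mk hli (by rw [Subtype.range_coe, hspan]), μ, fun v => by simpa using hμ v⟩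

namespace Matrix

variable {R : Type*} [CommRing R] {m n : Type*} [Fintype m] [Fintype n] [DecidableEq m]
  [DecidableEq n]

theorem aeval_transpose (M : Matrix n n R) (q : R[X]) : aeval Mᵀ q = (aeval M q)ᵀ := by
  simp only [aeval_eq_sum_range, transpose_sum, transpose_smul, transpose_pow]

theorem aeval_mul_eq_mul_aeval {M₁ : Matrix m m R} {M₂ : Matrix n n R} {B : Matrix m n R}
    (h : M₁ * B = B * M₂) (q : R[X]) : aeval M₁ q * B = B * aeval M₂ q := by
  induction q using Polynomial.induction_on with
  | C a => simp [Algebra.algebraMap_eq_smul_one]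
  | add p q hp hq => simp [Matrix.add_mul, Matrix.mul_add, hp, hq]
  | monomial k a ih =>
    rw [pow_succ, ← mul_assoc, map_mul (aeval M₁), map_mul (aeval M₂), aeval_X, aeval_X,
      Matrix.mul_assoc, h, ← Matrix.mul_assoc, ih, Matrix.mul_assoc]

theorem aeval_diagonal (d : n → R) (q : R[X]) :
    aeval (diagonal d) q = diagonal fun i => aeval (d i) q := by
  rw [← diagonalAlgHom_apply (R := R), aeval_algHom_apply, aeval_pi_apply]
  rfl

theorem aeval_eq_zero_of_transpose_mul_eq {ι : Type*} {M₁ : Matrix m m R} {M₂ : Matrix n n R}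
    {A : ι → Matrix m n R} (hA : ∀ y, (∀ i, (A i)ᵀ *ᵥ y = 0) → y = 0)
    (h : ∀ i, M₁ᵀ * A i = A i * M₂) {q : R[X]} (hq : aeval M₂ q = 0) : aeval M₁ q = 0 := by
  have hker (i : ι) : (A i)ᵀ * aeval M₁ q = 0 := by
    simpa [aeval_transpose, hq] using congrArg transpose (aeval_mul_eq_mul_aeval (h i) q)
  refine ext_iff_mulVec.2 fun v => ?_
  rw [zero_mulVec]
  exact hA _ fun i => by rw [mulVec_mulVec, hker i, zero_mulVec]

def IsDiagonalizable (M : Matrix n n R) : Prop :=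
  ∃ (P : Matrix n n R) (d : n → R), IsUnit P.det ∧ M = P * diagonal d * P⁻¹

theorem isDiagonalizable_of_mul_eq {M P : Matrix n n R} {d : n → R} (hP : IsUnit P.det)
    (h : M * P = P * diagonal d) : IsDiagonalizable M :=
  ⟨P, d, hP, by rw [← h, mul_nonsing_inv_cancel_right _ _ hP]⟩

theorem IsDiagonalizable.exists_mul_eq {M : Matrix n n R} (hM : IsDiagonalizable M) :
    ∃ (P : Matrix n n R) (d : n → R), IsUnit P.det ∧ M * P = P * diagonal d := by
  obtain ⟨P, d, hP, rfl⟩ := hM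
  exact ⟨P, d, hP, nonsing_inv_mul_cancel_right _ _ hP⟩

section Field

variable {K : Type*} [Field K]

theorem IsDiagonalizable.squarefree_minpoly {M : Matrix n n K} (hM : IsDiagonalizable M) :
    Squarefree (minpoly K M) := by
  obtain ⟨P, d, hP, hMP⟩ := hM.exists_mul_eq
  classical
  set p : K[X] := ∏ c ∈ Finset.univ.image d, (X - C c)
  have hp : Squarefree p := (separable_prod_X_sub_C_iff' (f := id).2 fun _ _ _ _ => id).squarefree
  have hdp : aeval (diagonal d) p = 0 := by
    rw [aeval_diagonal, diagonal_eq_zero]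
    funext i
    simp only [p, map_prod, map_sub, aeval_X, aeval_C, Algebra.algebraMap_self, RingHom.id_apply]
    exact Finset.prod_eq_zero (Finset.mem_image_of_mem d (Finset.mem_univ i)) (sub_self _)
  have hMp : aeval M p = 0 := by
    rw [← mul_nonsing_inv_cancel_right P (aeval M p) hP, aeval_mul_eq_mul_aeval hMP, hdp,
      Matrix.mul_zero, Matrix.zero_mul]
  exact hp.squarefree_of_dvd (minpoly.dvd K M hMp)

theorem isDiagonalizable_of_basis {ι : Type*} {M : Matrix n n K} (b : Module.Basis ι K (n → K))
    (d : ι → K) (hb : ∀ i, M *ᵥ b i = d i • b i) : IsDiagonalizable M := by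
  let e := b.indexEquiv (Pi.basisFun K n)
  let P := (Pi.basisFun K n).toMatrix (b.reindex e)
  have : Invertible P := (Pi.basisFun K n).invertibleToMatrix (b.reindex e)
  refine isDiagonalizable_of_mul_eq (d := d ∘ e.symm) (isUnit_det_of_invertible P) ?_
  ext i j
  have := congrFun (hb (e.symm j)) i
  simp only [mulVec, dotProduct, Pi.smul_apply, smul_eq_mul] at this
  rw [mul_diagonal]
  simp [P, Module.Basis.toMatrix_apply, mul_apply, this, mul_comm]

theorem isDiagonalizable_of_squarefree_aeval_eq_zero [IsAlgClosed K] {M : Matrix n n K}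
    {p : K[X]} (hp : Squarefree p) (hMp : aeval M p = 0) : IsDiagonalizable M := by
  have hss : Module.End.IsSemisimple (toLin' M) := by
    refine Module.End.isSemisimple_of_squarefree_aeval_eq_zero hp ?_
    change aeval (toLinAlgEquiv' M) p = 0
    rw [aeval_algEquiv, AlgHom.comp_apply, hMp, map_zero]
  obtain ⟨s, b, μ, hb⟩ := Module.End.exists_basis_eigenvectors hss.iSup_eigenspace_eq_top
  exact isDiagonalizable_of_basis b μ fun i => by simpa using hb i

end Field

end Matrix

/-- If `M₁ᵀ Aᵢ = Aᵢ M₂` for all `i`, the stacked matrix `[A₁ᵀ;…;A_Kᵀ]` has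
full column rank, and `M₂` is diagonalizable, then the minimal polynomial of
`M₁` divides that of `M₂`; if moreover `[A₁;…;A_K]` has full column rank,
then `M₁` is diagonalizable as well. -/
theorem stmt_12 {I₁ I₂ K : ℕ}
    (M₁ : Matrix (Fin I₁) (Fin I₁) ℂ) (M₂ : Matrix (Fin I₂) (Fin I₂) ℂ)
    (A : Fin K → Matrix (Fin I₁) (Fin I₂) ℂ)
    (hfcrT : ∀ y : Fin I₁ → ℂ, (∀ i, (A i)ᵀ.mulVec y = 0) → y = 0)
    (h : ∀ i, M₁ᵀ * A i = A i * M₂)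
    (hdiag₂ : ∃ (P : Matrix (Fin I₂) (Fin I₂) ℂ) (d : Fin I₂ → ℂ),
      IsUnit P.det ∧ M₂ = P * Matrix.diagonal d * P⁻¹) :
    minpoly ℂ M₁ ∣ minpoly ℂ M₂ ∧
    ((∀ x : Fin I₂ → ℂ, (∀ i, (A i).mulVec x = 0) → x = 0) →
      ∃ (P : Matrix (Fin I₁) (Fin I₁) ℂ) (d : Fin I₁ → ℂ),
        IsUnit P.det ∧ M₁ = P * Matrix.diagonal d * P⁻¹) := by
  have hq : aeval M₁ (minpoly ℂ M₂) = 0 :=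
    aeval_eq_zero_of_transpose_mul_eq hfcrT h (minpoly.aeval ℂ M₂)
  exact ⟨minpoly.dvd ℂ M₁ hq, fun _ =>
    isDiagonalizable_of_squarefree_aeval_eq_zero (IsDiagonalizable.squarefree_minpoly hdiag₂) hq⟩
end

section
/- Let Ã ∈ F^{Ĩ₁×…×Ĩ_N} and for n = 1,…,N̂ let U_n ∈ F^{I_n×Ĩ_n} have rows forming an orthonormal basis of the row space of the mode-n matrix representation of Ã. Define A = Ã •₁ U₁* ⋯ •_{N̂} U_{N̂}* (mode-wise multiplication by the conjugates). Then Ã = A •₁ U₁ᵀ ⋯ •_{N̂} U_{N̂}ᵀ, i.e. the compression is lossless and Ã is recovered exactly. -/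
open Matrix

/-- Mode-`n` matrix representation of an `N`-way tensor. -/
def unf {N : ℕ} (I : Fin N → ℕ)
    (T : (∀ m, Fin (I m)) → ℂ) (n : Fin N) :
    Matrix ((m : {m : Fin N // m ≠ n}) → Fin (I (m : Fin N))) (Fin (I n)) ℂ :=
  Matrix.of fun f i =>
    T (fun m => if h : m = n then Fin.cast (congrArg I h.symm) i else f ⟨m, h⟩)

lemma key_mode {N : ℕ} {It : Fin N → ℕ}
    (Q : ∀ n, Fin (It n) → Fin (It n) → ℂ)
    (At : (∀ n, Fin (It n)) → ℂ)
    (hQ : ∀ (n : Fin N) (w : ∀ m, Fin (It m)),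
      ∑ j, Q n (w n) j * At (Function.update w n j) = At w)
    (f : ∀ n, Fin (It n)) (s : Finset (Fin N)) :
    ∑ f' : ∀ n, Fin (It n),
      (∏ n ∈ s, Q n (f n) (f' n)) *
        (∏ n ∈ sᶜ, if f' n = f n then (1:ℂ) else 0) * At f' = At f := by
  induction s using Finset.induction_on with
  | empty =>
    simp only [Finset.prod_empty, one_mul, Finset.compl_empty, Finset.prod_boole]
    rw [Fintype.sum_eq_single f]
    · simp
    · intro g hg
      rw [if_neg, zero_mul]
      simp only [Finset.mem_univ, true_implies]
      exact fun h => hg (funext h)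
  | @insert a s ha ih =>
    set e := Equiv.piSplitAt a (fun n => Fin (It n)) with he
    have hsym : ∀ (j : Fin (It a)) (h : ∀ m : {m : Fin N // m ≠ a}, Fin (It (m : Fin N)))
        (m : Fin N) (hm : m ≠ a), e.symm (j, h) m = h ⟨m, hm⟩ := by
      intro j h m hm
      simp [he, Equiv.piSplitAt, hm]
    have hsyma : ∀ (j : Fin (It a)) h, e.symm (j, h) a = j := by
      intro j h; simp [he, Equiv.piSplitAt]
    have hupd : ∀ (j j' : Fin (It a)) h,
        Function.update (e.symm (j, h)) a j' = e.symm (j', h) := by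
      intro j j' h
      funext m
      by_cases hm : m = a
      · subst hm; rw [Function.update_self, hsyma]
      · rw [Function.update_of_ne hm, hsym _ _ _ hm, hsym _ _ _ hm]
    have hcompl : sᶜ = insert a ((insert a s)ᶜ) := by
      ext m; by_cases hm : m = a <;> simp [hm, ha]
    have hnotmem : a ∉ (insert a s)ᶜ := by simp
    rw [← ih,
      ← Equiv.sum_comp e.symm (fun f' => (∏ n ∈ insert a s, Q n (f n) (f' n)) *
        (∏ n ∈ (insert a s)ᶜ, if f' n = f n then (1:ℂ) else 0) * At f'),
      ← Equiv.sum_comp e.symm (fun f' => (∏ n ∈ s, Q n (f n) (f' n)) *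
        (∏ n ∈ sᶜ, if f' n = f n then (1:ℂ) else 0) * At f'),
      Fintype.sum_prod_type, Fintype.sum_prod_type, Finset.sum_comm,
      Finset.sum_comm (γ := Fin (It a))]
    apply Finset.sum_congr rfl
    intro h _
    set w := e.symm (f a, h) with hw
    have hfix : ∀ (j : Fin (It a)) (m : Fin N), m ≠ a → e.symm (j, h) m = w m := by
      intro j m hm; rw [hsym j h m hm, hw, hsym (f a) h m hm]
    have keyQ : ∀ j : Fin (It a),
        (∏ n ∈ s, Q n (f n) (e.symm (j, h) n)) = ∏ n ∈ s, Q n (f n) (w n) := by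
      intro j
      refine Finset.prod_congr rfl fun n hn => ?_
      rw [hfix j n (fun hna => ha (hna ▸ hn))]
    have keyD : ∀ j : Fin (It a),
        (∏ n ∈ (insert a s)ᶜ, if e.symm (j, h) n = f n then (1:ℂ) else 0)
          = ∏ n ∈ (insert a s)ᶜ, if w n = f n then (1:ℂ) else 0 := by
      intro j
      refine Finset.prod_congr rfl fun n hn => ?_
      rw [hfix j n (by intro hna; exact (Finset.mem_compl.mp hn) (hna ▸ Finset.mem_insert_self a s))]
    have hwa : w a = f a := hsyma (f a) h
    calc ∑ j : Fin (It a), (∏ n ∈ insert a s, Q n (f n) (e.symm (j, h) n)) *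
            (∏ n ∈ (insert a s)ᶜ, if e.symm (j, h) n = f n then (1:ℂ) else 0) * At (e.symm (j, h))
        = ∑ j : Fin (It a), ((∏ n ∈ s, Q n (f n) (w n)) *
            (∏ n ∈ (insert a s)ᶜ, if w n = f n then (1:ℂ) else 0)) *
            (Q a (f a) j * At (Function.update w a j)) := by
          refine Finset.sum_congr rfl fun j _ => ?_
          rw [Finset.prod_insert ha, hsyma, keyQ, keyD, hupd (f a) j h]
          ring
      _ = ((∏ n ∈ s, Q n (f n) (w n)) *
            (∏ n ∈ (insert a s)ᶜ, if w n = f n then (1:ℂ) else 0)) *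
            ∑ j, Q a (w a) j * At (Function.update w a j) := by
          rw [← Finset.mul_sum, hwa]
      _ = ((∏ n ∈ s, Q n (f n) (w n)) *
            (∏ n ∈ (insert a s)ᶜ, if w n = f n then (1:ℂ) else 0)) * At w := by rw [hQ a w]
      _ = ∑ j : Fin (It a), (∏ n ∈ s, Q n (f n) (e.symm (j, h) n)) *
            (∏ n ∈ sᶜ, if e.symm (j, h) n = f n then (1:ℂ) else 0) * At (e.symm (j, h)) := by
          rw [Finset.sum_eq_single (f a)]
          · rw [keyQ, hcompl, Finset.prod_insert hnotmem, keyD, hsyma, if_pos rfl, ← hw]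
            ring
          · intro j _ hj
            rw [hcompl, Finset.prod_insert hnotmem, hsyma, if_neg (by simpa using hj)]
            ring
          · intro hmem; exact absurd (Finset.mem_univ _) hmem

/-- Lossless compression: let `Ã` be an `N`-way tensor, and for each of the
first `N̂` modes let the rows of `U_n` form an orthonormal basis of the row
space of the mode-`n` representation of `Ã`; in the remaining modes `U_n` is
the identity matrix (no compression). If `A = Ã •₁ U₁* ⋯ •_{N̂} U_{N̂}*`
(expressed entrywise as a multi-mode product), then
`Ã = A •₁ U₁ᵀ ⋯ •_{N̂} U_{N̂}ᵀ`. -/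
theorem stmt_15 {N Nh : ℕ} (hNh : Nh ≤ N) (It K : Fin N → ℕ)
    (U : ∀ n, Matrix (Fin (K n)) (Fin (It n)) ℂ)
    (At : (∀ n, Fin (It n)) → ℂ)
    (horth : ∀ n : Fin N, (n : ℕ) < Nh → U n * (U n)ᴴ = 1)
    (hspan : ∀ n : Fin N, (n : ℕ) < Nh →
      Submodule.span ℂ (Set.range fun r : Fin (K n) => fun j : Fin (It n) => U n r j) =
        Submodule.span ℂ
          (Set.range fun f : (m : {m : Fin N // m ≠ n}) → Fin (It (m : Fin N)) =>
            fun j : Fin (It n) => unf It At n f j))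
    (hid : ∀ n : Fin N, Nh ≤ (n : ℕ) → K n = It n ∧
      ∀ (i : Fin (K n)) (j : Fin (It n)), U n i j = if (i : ℕ) = (j : ℕ) then 1 else 0)
    (A : (∀ n, Fin (K n)) → ℂ)
    (hA : ∀ g : ∀ n, Fin (K n),
      A g = ∑ f : ∀ n, Fin (It n), (∏ n, star (U n (g n) (f n))) * At f) :
    ∀ f : ∀ n, Fin (It n),
      At f = ∑ g : ∀ n, Fin (K n), (∏ n, U n (g n) (f n)) * A g := by
  intro f
  set Q : ∀ n, Fin (It n) → Fin (It n) → ℂ :=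
    fun n i j => ∑ g, U n g i * star (U n g j) with hQdef
  have hQ : ∀ (n : Fin N) (w : ∀ m, Fin (It m)),
      ∑ j, Q n (w n) j * At (Function.update w n j) = At w := by
    intro n w
    by_cases hn : (n : ℕ) < Nh
    · -- the compressed modes: use span + orthonormality
      have hrow : ∀ u ∈ Submodule.span ℂ
          (Set.range fun r : Fin (K n) => fun j : Fin (It n) => U n r j),
          ∀ i, ∑ j, Q n i j * u j = u i := by
        intro u hu
        induction hu using Submodule.span_induction with
        | mem u hu =>
          obtain ⟨r, rfl⟩ := hu
          intro i
          calc ∑ j, Q n i j * U n r j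
              = ∑ g, U n g i * ∑ j, U n r j * star (U n g j) := by
                simp only [hQdef, Finset.sum_mul]
                rw [Finset.sum_comm]
                refine Finset.sum_congr rfl fun g _ => ?_
                rw [Finset.mul_sum]
                refine Finset.sum_congr rfl fun j _ => ?_
                ring
            _ = ∑ g, U n g i * (U n * (U n)ᴴ) r g := by
                refine Finset.sum_congr rfl fun g _ => ?_
                rw [Matrix.mul_apply]
                simp [Matrix.conjTranspose_apply]
            _ = ∑ g, U n g i * (1 : Matrix (Fin (K n)) (Fin (K n)) ℂ) r g := by
                rw [horth n hn]
            _ = U n r i := by simp [Matrix.one_apply]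
        | zero => intro i; simp
        | add x y _ _ hx hy =>
          intro i
          simp only [Pi.add_apply, mul_add, Finset.sum_add_distrib]
          rw [hx i, hy i]
        | smul c x _ hx =>
          intro i
          simp only [Pi.smul_apply, smul_eq_mul]
          rw [← hx i, Finset.mul_sum]
          refine Finset.sum_congr rfl fun j _ => ?_
          ring
      have hv : (fun j => At (Function.update w n j)) ∈ Submodule.span ℂ
          (Set.range fun r : Fin (K n) => fun j : Fin (It n) => U n r j) := by
        rw [hspan n hn]
        apply Submodule.subset_span
        refine ⟨fun m => w m, ?_⟩
        funext j
        show At _ = At _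
        congr 1
        funext m
        by_cases hm : m = n
        · subst hm
          simp [unf, Function.update, Fin.ext_iff]
        · simp [unf, Function.update, hm]
      have := hrow _ hv (w n)
      rwa [Function.update_eq_self] at this
    · -- the identity modes
      obtain ⟨hK, hU⟩ := hid n (le_of_not_gt hn)
      have hQn : ∀ i j : Fin (It n), Q n i j = if i = j then 1 else 0 := by
        intro i j
        simp only [hQdef, hU]
        rw [Finset.sum_eq_single (Fin.cast hK.symm i)]
        · simp [Fin.ext_iff]
        · intro g _ hg
          rw [if_neg, zero_mul]
          intro hgi
          exact hg (Fin.ext (by simpa using hgi))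
        · simp
      simp only [hQn]
      rw [Finset.sum_eq_single (w n)]
      · rw [if_pos rfl, one_mul, Function.update_eq_self]
      · intro j _ hj
        rw [if_neg (Ne.symm hj), zero_mul]
      · simp
  have main := key_mode Q At hQ f Finset.univ
  simp only [Finset.compl_univ, Finset.prod_empty, mul_one] at main
  rw [← main]
  symm
  calc ∑ g : ∀ n, Fin (K n), (∏ n, U n (g n) (f n)) * A g
      = ∑ g : ∀ n, Fin (K n), ∑ f' : ∀ n, Fin (It n),
          (∏ n, U n (g n) (f n) * star (U n (g n) (f' n))) * At f' := by
        refine Finset.sum_congr rfl fun g _ => ?_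
        rw [hA g, Finset.mul_sum]
        refine Finset.sum_congr rfl fun f' _ => ?_
        rw [Finset.prod_mul_distrib]
        ring
    _ = ∑ f' : ∀ n, Fin (It n), ∑ g : ∀ n, Fin (K n),
          (∏ n, U n (g n) (f n) * star (U n (g n) (f' n))) * At f' := Finset.sum_comm
    _ = ∑ f' : ∀ n, Fin (It n), (∏ n, Q n (f n) (f' n)) * At f' := by
        refine Finset.sum_congr rfl fun f' _ => ?_
        rw [← Finset.sum_mul]
        congr 1
        rw [Finset.prod_univ_sum (fun _ => Finset.univ)
          (fun n gg => U n gg (f n) * star (U n gg (f' n))), Fintype.piFinset_univ]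
end

section
/- Let M₁ ∈ F^{I₁×I₁} and M₂ ∈ F^{I₂×I₂} satisfy M₁ᵀ Aᵢ = Aᵢ M₂ for i = 1,…,K, with M₁ = S₁ Bdiag(λ₁ I_{L₁₁},…,λ_R I_{L₁R}) S₁⁻¹ and M₂ = S₂ Bdiag(λ₁ I_{L₂₁},…,λ_R I_{L₂R}) S₂⁻¹ for distinct scalars λ₁,…,λ_R. Then, writing X^{(1)} = S₁⁻ᵀ = [X₁^{(1)} … X_R^{(1)}] and X^{(2)} = S₂⁻ᵀ = [X₁^{(2)} … X_R^{(2)}] partitioned conformally, there exist matrices D_{i,r} ∈ F^{L₁r×L₂r} such that Aᵢ = Σ_r X_r^{(1)} D_{i,r} (X_r^{(2)})ᵀ and Bᵢ := M₁ᵀ Aᵢ = Σ_r λ_r X_r^{(1)} D_{i,r} (X_r^{(2)})ᵀ for all i, i.e., the slices Bᵢ are generated by the same low-rank terms as Aᵢ, scaled by λ_r. -/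
/-!
In the eigenbases, `M₁ᵀ = S₁⁻ᵀ Λ₁ S₁ᵀ` and `M₂ = S₂ Λ₂ S₂⁻¹` with `Λₙ` diagonal, and
`Cᵢ = S₁ᵀ Aᵢ S₂` satisfies `Λ₁ Cᵢ = Cᵢ Λ₂`. Entrywise this reads `(λ_r - λ_s) Cᵢ(p, q) = 0` for
`p` in block `r` and `q` in block `s`, so distinctness of the `λ_r` makes `Cᵢ` block diagonal;
its diagonal blocks are the `D_{i,r}`, and expanding `Aᵢ = S₁⁻ᵀ Cᵢ S₂⁻¹` and
`M₁ᵀ Aᵢ = S₁⁻ᵀ Λ₁ Cᵢ S₂⁻¹` block by block gives both decompositions.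
-/

open Matrix

namespace Matrix

variable {l o p α : Type*} {m' n' : o → Type*}

theorem blockDiagonal'_smul_one [DecidableEq o] [∀ r, DecidableEq (m' r)] [NonAssocSemiring α]
    (c : o → α) :
    blockDiagonal' (fun r => c r • (1 : Matrix (m' r) (m' r) α)) = diagonal fun q => c q.1 := by
  simp only [smul_one_eq_diagonal, blockDiagonal'_diagonal]

theorem blockDiagonal'_blockDiag'_of_apply_eq_zero [DecidableEq o] [Zero α]
    (M : Matrix (Σ r, m' r) (Σ r, n' r) α) (hM : ∀ i j, i.1 ≠ j.1 → M i j = 0) :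
    blockDiagonal' (blockDiag' M) = M := by
  ext ⟨r, a⟩ ⟨s, b⟩
  obtain rfl | hrs := eq_or_ne r s
  · rw [blockDiagonal'_apply_eq, blockDiag'_apply]
  · rw [blockDiagonal'_apply_ne _ _ _ hrs, hM _ _ hrs]

theorem apply_eq_zero_of_diagonal_mul_eq_mul_diagonal [Fintype l] [DecidableEq l]
    [Fintype p] [DecidableEq p] [CommRing α] [NoZeroDivisors α]
    {d₁ : l → α} {d₂ : p → α} {C : Matrix l p α} (h : diagonal d₁ * C = C * diagonal d₂)
    {i : l} {j : p} (hij : d₁ i ≠ d₂ j) : C i j = 0 := by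
  have hentry := congrFun₂ h i j
  rw [diagonal_mul, mul_diagonal, mul_comm, ← sub_eq_zero, ← mul_sub] at hentry
  exact (mul_eq_zero.mp hentry).resolve_right (sub_ne_zero.mpr hij)

theorem mul_blockDiagonal'_mul [Fintype o] [DecidableEq o] [∀ r, Fintype (m' r)]
    [∀ r, Fintype (n' r)] [NonUnitalNonAssocSemiring α]
    (X : Matrix l (Σ r, m' r) α) (D : ∀ r, Matrix (m' r) (n' r) α)
    (Y : Matrix (Σ r, n' r) p α) :
    X * blockDiagonal' D * Y =
      ∑ r, X.submatrix id (Sigma.mk r) * D r * Y.submatrix (Sigma.mk r) id := by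
  ext i j
  simp only [sum_apply, mul_apply, Fintype.sum_sigma, submatrix_apply, id]
  refine Finset.sum_congr rfl fun s _ => Finset.sum_congr rfl fun b _ => ?_
  rw [Finset.sum_eq_single s]
  · simp only [blockDiagonal'_apply_eq]
  · intro r _ hrs
    simp only [blockDiagonal'_apply_ne _ _ _ hrs, mul_zero, Finset.sum_const_zero]
  · simp

theorem intertwines_conj_of_intertwines {ι₁ κ₁ ι₂ κ₂ : Type*} [Fintype ι₁] [Fintype κ₁]
    [Fintype ι₂] [Fintype κ₂] [DecidableEq κ₁] [DecidableEq κ₂] [Semiring α]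
    {P : Matrix ι₁ κ₁ α} {P' : Matrix κ₁ ι₁ α} {Q : Matrix ι₂ κ₂ α} {Q' : Matrix κ₂ ι₂ α}
    (hP : P' * P = 1) (hQ : Q' * Q = 1) {Λ₁ : Matrix κ₁ κ₁ α} {Λ₂ : Matrix κ₂ κ₂ α}
    {A : Matrix ι₁ ι₂ α} (hA : P * Λ₁ * P' * A = A * (Q * Λ₂ * Q')) :
    Λ₁ * (P' * A * Q) = P' * A * Q * Λ₂ :=
  calc Λ₁ * (P' * A * Q) = P' * (P * Λ₁ * P' * A) * Q := by
        simp only [← Matrix.mul_assoc, hP, Matrix.one_mul]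
    _ = P' * A * Q * Λ₂ := by
        rw [hA]; simp only [Matrix.mul_assoc, hQ, Matrix.mul_one]

end Matrix

/-- If `M₁ᵀ Aᵢ = Aᵢ M₂` with `M₁ = S₁ Bdiag(λ₁I,…,λ_R I) S₁⁻¹` and
`M₂ = S₂ Bdiag(λ₁I,…,λ_R I) S₂⁻¹` for distinct scalars `λ_r`, then with
`X^{(n)} = S_n⁻ᵀ` partitioned conformally into blocks `X_r^{(n)}`, there are
matrices `D_{i,r}` with `Aᵢ = Σ_r X_r^{(1)} D_{i,r} X_r^{(2)ᵀ}` and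
`M₁ᵀ Aᵢ = Σ_r λ_r X_r^{(1)} D_{i,r} X_r^{(2)ᵀ}`. -/
theorem stmt_18 {R I₁ I₂ K : ℕ} (L₁ L₂ : Fin R → ℕ) (lam : Fin R → ℂ)
    (hdist : Function.Injective lam)
    (S₁ : Matrix (Fin I₁) ((r : Fin R) × Fin (L₁ r)) ℂ)
    (S₁' : Matrix ((r : Fin R) × Fin (L₁ r)) (Fin I₁) ℂ)
    (h₁ : S₁ * S₁' = 1) (h₁' : S₁' * S₁ = 1)
    (S₂ : Matrix (Fin I₂) ((r : Fin R) × Fin (L₂ r)) ℂ)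
    (S₂' : Matrix ((r : Fin R) × Fin (L₂ r)) (Fin I₂) ℂ)
    (h₂ : S₂ * S₂' = 1) (h₂' : S₂' * S₂ = 1)
    (M₁ : Matrix (Fin I₁) (Fin I₁) ℂ)
    (hM₁ : M₁ = S₁ * Matrix.blockDiagonal'
      (fun r => lam r • (1 : Matrix (Fin (L₁ r)) (Fin (L₁ r)) ℂ)) * S₁')
    (M₂ : Matrix (Fin I₂) (Fin I₂) ℂ)
    (hM₂ : M₂ = S₂ * Matrix.blockDiagonal'
      (fun r => lam r • (1 : Matrix (Fin (L₂ r)) (Fin (L₂ r)) ℂ)) * S₂')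
    (A : Fin K → Matrix (Fin I₁) (Fin I₂) ℂ)
    (hA : ∀ i, M₁ᵀ * A i = A i * M₂) :
    -- the blocks of X^{(1)} = S₁⁻ᵀ = S₁'ᵀ and X^{(2)} = S₂⁻ᵀ = S₂'ᵀ
    ∃ D : Fin K → ∀ r, Matrix (Fin (L₁ r)) (Fin (L₂ r)) ℂ,
      ∀ i : Fin K,
        A i = ∑ r : Fin R,
          (Matrix.of fun i₁ (j : Fin (L₁ r)) => S₁'ᵀ i₁ ⟨r, j⟩) * D i r *
            (Matrix.of fun i₂ (j : Fin (L₂ r)) => S₂'ᵀ i₂ ⟨r, j⟩)ᵀ ∧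
        M₁ᵀ * A i = ∑ r : Fin R,
          lam r • ((Matrix.of fun i₁ (j : Fin (L₁ r)) => S₁'ᵀ i₁ ⟨r, j⟩) * D i r *
            (Matrix.of fun i₂ (j : Fin (L₂ r)) => S₂'ᵀ i₂ ⟨r, j⟩)ᵀ) := by
  rw [blockDiagonal'_smul_one] at hM₁ hM₂
  set Λ₁ := diagonal fun q : Σ r, Fin (L₁ r) => lam q.1
  set Λ₂ := diagonal fun q : Σ r, Fin (L₂ r) => lam q.1
  have hT₁ : S₁'ᵀ * S₁ᵀ = 1 := by rw [← transpose_mul, h₁, transpose_one]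
  have hT₁' : S₁ᵀ * S₁'ᵀ = 1 := by rw [← transpose_mul, h₁', transpose_one]
  have hM₁T : M₁ᵀ = S₁'ᵀ * Λ₁ * S₁ᵀ := by
    rw [hM₁, transpose_mul, transpose_mul, diagonal_transpose, Matrix.mul_assoc]
  let C i := S₁ᵀ * A i * S₂
  have hA_eq i : A i = S₁'ᵀ * C i * S₂' := by
    calc A i = (S₁'ᵀ * S₁ᵀ) * A i * (S₂ * S₂') := by rw [hT₁, h₂, Matrix.one_mul, Matrix.mul_one]
      _ = S₁'ᵀ * C i * S₂' := by simp only [C, Matrix.mul_assoc]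
  have hMA_eq i : M₁ᵀ * A i = S₁'ᵀ * (Λ₁ * C i) * S₂' := by
    rw [hM₁T]
    simp only [C, Matrix.mul_assoc, h₂, Matrix.mul_one]
  have hC_comm i : Λ₁ * C i = C i * Λ₂ :=
    intertwines_conj_of_intertwines hT₁' h₂' (by rw [← hM₁T, ← hM₂, hA i])
  have hC_block i : blockDiagonal' (blockDiag' (C i)) = C i :=
    blockDiagonal'_blockDiag'_of_apply_eq_zero _ fun _ _ hrs =>
      apply_eq_zero_of_diagonal_mul_eq_mul_diagonal (hC_comm i) (hdist.ne hrs)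
  refine ⟨fun i => blockDiag' (C i), fun i => ⟨?_, ?_⟩⟩
  -- `rfl`: `X.submatrix id (Sigma.mk r)` unfolds to the column block `of fun i j => X i ⟨r, j⟩`.
  · rw [hA_eq i, ← hC_block i, mul_blockDiagonal'_mul]
    rfl
  · have hΛ₁ : Λ₁ = blockDiagonal' fun r => lam r • 1 := (blockDiagonal'_smul_one _).symm
    rw [hMA_eq i, ← hC_block i, hΛ₁, ← blockDiagonal'_mul, mul_blockDiagonal'_mul]
    simp only [Matrix.smul_mul, Matrix.one_mul, Matrix.mul_smul]
    rfl
end
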